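/- Let σ_f², σ_ξ², σ̂_f², σ̂_ξ² > 0 and define F(m) = σ_f² + σ_ξ² − 2·(m σ_f² σ̂_f²/(σ̂_ξ² + m σ̂_f²)) + (σ̂_f⁴/σ̂_ξ⁴)·m(σ_ξ² + m σ_f²)·(σ̂_ξ²/(σ̂_ξ² + m σ̂_f²))². Then F(m) = σ_ξ²(1 + 1/m) + O(1/m²) as m → ∞, i.e. there exists C such that |F(m) − σ_ξ²(1 + 1/m)| ≤ C/m² for all m ≥ 1. -/
import Mathlib


theorem stmt_6 (σf2 σξ2 σhf2 σhξ2 : ℝ)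
    (hf : 0 < σf2) (hξ : 0 < σξ2) (hhf : 0 < σhf2) (hhξ : 0 < σhξ2) :
    ∃ C : ℝ, ∀ m : ℕ, 1 ≤ m →
      |(σf2 + σξ2 - 2 * (m * σf2 * σhf2 / (σhξ2 + m * σhf2)) +
          σhf2 ^ 2 / σhξ2 ^ 2 * (m * (σξ2 + m * σf2)) *
            (σhξ2 / (σhξ2 + m * σhf2)) ^ 2)
        - σξ2 * (1 + 1 / m)| ≤ C / m ^ 2 := by
  set A : ℝ := |σf2 * σhξ2 - 2 * σξ2 * σhf2| with hA
  set B : ℝ := σξ2 * σhξ2 with hB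
  refine ⟨σhξ2 * (A + B) / σhf2 ^ 2, fun m hm => ?_⟩
  have hx : (1 : ℝ) ≤ (m : ℝ) := by exact_mod_cast hm
  set x : ℝ := (m : ℝ) with hxdef
  have hx0 : (0 : ℝ) < x := lt_of_lt_of_le one_pos hx
  have hD : (0 : ℝ) < σhξ2 + x * σhf2 := by positivity
  have heq : σf2 + σξ2 - 2 * (x * σf2 * σhf2 / (σhξ2 + x * σhf2)) +
          σhf2 ^ 2 / σhξ2 ^ 2 * (x * (σξ2 + x * σf2)) *
            (σhξ2 / (σhξ2 + x * σhf2)) ^ 2 - σξ2 * (1 + 1 / x)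
      = σhξ2 * (x * (σf2 * σhξ2 - 2 * σξ2 * σhf2) - σξ2 * σhξ2) /
          (x * (σhξ2 + x * σhf2) ^ 2) := by
    field_simp
    ring
  rw [heq, abs_div]
  have hden : |x * (σhξ2 + x * σhf2) ^ 2| = x * (σhξ2 + x * σhf2) ^ 2 := by
    rw [abs_of_pos]; positivity
  rw [hden]
  have hnum : |σhξ2 * (x * (σf2 * σhξ2 - 2 * σξ2 * σhf2) - σξ2 * σhξ2)|
      ≤ σhξ2 * (x * (A + B)) := by
    rw [abs_mul, abs_of_pos hhξ]
    refine mul_le_mul_of_nonneg_left ?_ hhξ.le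
    calc |x * (σf2 * σhξ2 - 2 * σξ2 * σhf2) - σξ2 * σhξ2|
        ≤ |x * (σf2 * σhξ2 - 2 * σξ2 * σhf2)| + |σξ2 * σhξ2| := abs_sub _ _
      _ = x * A + B := by
          rw [abs_mul, abs_of_pos hx0, abs_of_pos (by positivity : (0:ℝ) < σξ2 * σhξ2)]
      _ ≤ x * A + x * B := by nlinarith [abs_nonneg (σf2 * σhξ2 - 2 * σξ2 * σhf2), hB ▸ (mul_pos hξ hhξ)]
      _ = x * (A + B) := by ring
  have hden2 : x * (x * σhf2) ^ 2 ≤ x * (σhξ2 + x * σhf2) ^ 2 :=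
    mul_le_mul_of_nonneg_left (pow_le_pow_left₀ (by positivity) (by linarith) 2) hx0.le
  calc |σhξ2 * (x * (σf2 * σhξ2 - 2 * σξ2 * σhf2) - σξ2 * σhξ2)| /
        (x * (σhξ2 + x * σhf2) ^ 2)
      ≤ σhξ2 * (x * (A + B)) / (x * (x * σhf2) ^ 2) := by
        apply div_le_div₀ (by positivity) hnum (by positivity) hden2
    _ = σhξ2 * (A + B) / σhf2 ^ 2 / x ^ 2 := by field_simp
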